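/- The permanent-memory Accept-First queue algorithm (PFQ) with initial agent order 1,...,n produces the same matching as the simultaneous Naive Boston mechanism in which every item has the common priority order 1 > ... > n. -/

import Mathlib

/-- One round of the simultaneous (Naive) Boston mechanism with unit capacities and
common priority order `0 > 1 > ⋯ > n-1`; `pref a k` is agent `a`'s `k`-th ranked
item (0-based). -/
def bostonStep {n : ℕ} (pref : Fin n → ℕ → Fin n) (k : ℕ)
    (st : Fin n → Option (Fin n)) : Fin n → Option (Fin n) :=
  fun a =>
    match st a with
    | some o => some o
    | none =>
        if (∀ b : Fin n, st b ≠ some (pref a k)) ∧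
            (∀ b : Fin n, b < a → st b = none → pref b k ≠ pref a k)
        then some (pref a k) else none

/-- The partial matching of the Boston mechanism after `k` rounds. -/
def bostonState {n : ℕ} (pref : Fin n → ℕ → Fin n) : ℕ → Fin n → Option (Fin n)
  | 0 => fun _ => none
  | k + 1 => bostonStep pref k (bostonState pref k)

/-- State of the permanent-memory Accept-First queue algorithm (PFQ): the queue of
agents still to propose, for each agent the set of items that have rejected it, and
the (permanent) partial assignment of items to agents. -/
structure PFQState (n : ℕ) where
  queue : List (Fin n)
  rejected : Fin n → Finset (Fin n)
  assign : Fin n → Option (Fin n)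

/-- One step of PFQ: the agent `a` at the front of the queue proposes to its most
preferred item among those that have not rejected it.  If that item is unmatched it
permanently accepts `a`; otherwise `a` is rejected and goes to the back of the
queue. -/
def pfqStep {n : ℕ} (pref : Fin n → ℕ → Fin n) (s : PFQState n) : PFQState n :=
  match s.queue with
  | [] => s
  | a :: rest =>
      match ((List.range n).find? fun k => decide (pref a k ∉ s.rejected a)) with
      | none => { s with queue := rest }
      | some k =>
          let o := pref a k
          if ∀ b : Fin n, s.assign b ≠ some o then
            { s with queue := rest, assign := Function.update s.assign a (some o) }
          else
            { s with queue := rest ++ [a],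
                     rejected := Function.update s.rejected a
                        (insert o (s.rejected a)) }

/-- The final state of PFQ started from the queue `0, 1, …, n-1` with no rejections
and no assignments (enough steps are taken for the algorithm to terminate). -/
def pfqRun {n : ℕ} (pref : Fin n → ℕ → Fin n) : PFQState n :=
  (pfqStep pref)^[n * n + n]
    { queue := List.finRange n, rejected := fun _ => ∅, assign := fun _ => none }

/-!
Run from the queue `0, 1, …, n-1`, PFQ simulates the Boston mechanism round by round. At the
start of its `k`-th pass through the queue, the queue lists the agents unmatched after `k`
Boston rounds in increasing order, each rejected by exactly its first `k` choices, so each of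
them proposes to its `k`-th choice. Since they act in priority order, agent `a` is accepted iff
its `k`-th choice is not held once the agents before `a` have acted, which is exactly Boston's
rule: the item is free and no unmatched agent of higher priority applies to it. After `n`
rounds Boston has matched everybody, since an unmatched agent would find each of its `n`
choices held by one of the `n - 1` other agents.
-/

section Boston

variable {n : ℕ} (pref : Fin n → ℕ → Fin n)

lemma bostonState_succ_of_eq_some {k : ℕ} {a o : Fin n} (h : bostonState pref k a = some o) :
    bostonState pref (k + 1) a = some o := by
  simp [bostonState, bostonStep, h]

lemma bostonState_succ_eq_of_ne_none {k : ℕ} {a : Fin n} (h : bostonState pref k a ≠ none) :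
    bostonState pref (k + 1) a = bostonState pref k a := by
  obtain ⟨o, ho⟩ := Option.ne_none_iff_exists'.mp h
  rw [ho, bostonState_succ_of_eq_some pref ho]

lemma bostonState_succ_of_eq_none {k : ℕ} {a : Fin n} (h : bostonState pref k a = none) :
    bostonState pref (k + 1) a =
      if (∀ b, bostonState pref k b ≠ some (pref a k)) ∧
          (∀ b, b < a → bostonState pref k b = none → pref b k ≠ pref a k)
      then some (pref a k) else none := by
  simp only [bostonState, bostonStep, h]

lemma bostonState_succ_eq_none_of_ne {k : ℕ} {a : Fin n} (ha : bostonState pref k a = none)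
    (h : bostonState pref (k + 1) a ≠ some (pref a k)) : bostonState pref (k + 1) a = none := by
  rw [bostonState_succ_of_eq_none pref ha] at h ⊢
  split_ifs at h ⊢ <;> simp_all

lemma bostonState_succ_eq_some {k : ℕ} {a o : Fin n} (h : bostonState pref (k + 1) a = some o) :
    bostonState pref k a = some o ∨ (bostonState pref k a = none ∧ pref a k = o) := by
  cases ha : bostonState pref k a with
  | some o' => rw [bostonState_succ_of_eq_some pref ha] at h; exact .inl h
  | none =>
    rw [bostonState_succ_of_eq_none pref ha] at h
    split_ifs at h
    exact .inr ⟨rfl, Option.some_injective _ h⟩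

lemma bostonState_mono {k l : ℕ} (hkl : k ≤ l) {a o : Fin n}
    (h : bostonState pref k a = some o) : bostonState pref l a = some o := by
  induction l, hkl using Nat.le_induction with
  | base => exact h
  | succ l _ ih => exact bostonState_succ_of_eq_some pref ih

lemma bostonState_eq_none_of_le {k l : ℕ} (hkl : k ≤ l) {a : Fin n}
    (h : bostonState pref l a = none) : bostonState pref k a = none := by
  by_contra hk
  obtain ⟨o, ho⟩ := Option.ne_none_iff_exists'.mp hk
  simp [bostonState_mono pref hkl ho] at h

lemma exists_le_bostonState_succ_eq_some {k : ℕ} {o : Fin n}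
    (hfree : ∀ c, bostonState pref k c ≠ some o) (b : Fin n)
    (hb : bostonState pref k b = none) (hbo : pref b k = o) :
    ∃ c ≤ b, bostonState pref (k + 1) c = some o := by
  induction b using WellFoundedLT.induction with
  | _ b ih =>
  subst hbo
  by_cases hfirst : ∀ c, c < b → bostonState pref k c = none → pref c k ≠ pref b k
  · exact ⟨b, le_rfl, by rw [bostonState_succ_of_eq_none pref hb, if_pos ⟨hfree, hfirst⟩]⟩
  · push Not at hfirst
    obtain ⟨c, hcb, hc, hco⟩ := hfirst
    obtain ⟨d, hdc, hd⟩ := ih c hcb hc hco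
    exact ⟨d, hdc.trans hcb.le, hd⟩

/-- The Boston matching in the middle of round `k` when its applicants are processed one at a
time in priority order and agent `a` is next. -/
def bostonStateBefore (k : ℕ) (a b : Fin n) : Option (Fin n) :=
  if b < a then bostonState pref (k + 1) b else bostonState pref k b

theorem bostonState_succ_eq_some_iff {k : ℕ} {a : Fin n} (ha : bostonState pref k a = none) :
    bostonState pref (k + 1) a = some (pref a k) ↔
      ∀ b, bostonStateBefore pref k a b ≠ some (pref a k) := by
  rw [bostonState_succ_of_eq_none pref ha]
  split_ifs with hacc
  · simp only [true_iff]
    intro b hb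
    unfold bostonStateBefore at hb
    split_ifs at hb with hba
    · rcases bostonState_succ_eq_some pref hb with hb | ⟨hbn, hbo⟩
      · exact hacc.1 b hb
      · exact hacc.2 b hba hbn hbo
    · exact hacc.1 b hb
  · simp only [false_iff, not_forall, not_not]
    by_cases hfree : ∀ c, bostonState pref k c ≠ some (pref a k)
    · obtain ⟨b, hba, hb, hbo⟩ :
          ∃ b < a, bostonState pref k b = none ∧ pref b k = pref a k := by
        simpa [hfree] using hacc
      obtain ⟨c, hcb, hc⟩ := exists_le_bostonState_succ_eq_some pref hfree b hb hbo
      exact ⟨c, by rwa [bostonStateBefore, if_pos (hcb.trans_lt hba)]⟩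
    · push Not at hfree
      obtain ⟨c, hc⟩ := hfree
      refine ⟨c, ?_⟩
      unfold bostonStateBefore
      split_ifs
      · exact bostonState_succ_of_eq_some pref hc
      · exact hc

lemma exists_bostonState_eq_pref_of_lt {k j : ℕ} {a : Fin n}
    (ha : bostonState pref k a = none) (hj : j < k) :
    ∃ b, bostonState pref k b = some (pref a j) := by
  have hrej : bostonState pref (j + 1) a ≠ some (pref a j) := by
    simp [bostonState_eq_none_of_le pref hj ha]
  obtain ⟨b, hb⟩ : ∃ b, bostonStateBefore pref j a b = some (pref a j) := by
    simpa using (bostonState_succ_eq_some_iff pref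
      (bostonState_eq_none_of_le pref hj.le ha)).not.mp hrej
  refine ⟨b, ?_⟩
  unfold bostonStateBefore at hb
  split_ifs at hb
  · exact bostonState_mono pref hj hb
  · exact bostonState_mono pref hj.le hb

theorem bostonState_ne_none
    (hpref : ∀ a : Fin n, ∀ k l : ℕ, k < n → l < n → pref a k = pref a l → k = l)
    (a : Fin n) : bostonState pref n a ≠ none := by
  intro ha
  choose g hg using fun j : Fin n => exists_bostonState_eq_pref_of_lt pref ha j.isLt
  have hinj : Set.InjOn g Set.univ := fun j _ j' _ h => Fin.ext <|
    hpref a j j' j.isLt j'.isLt <| Option.some_injective _ <| (hg j).symm.trans (h ▸ hg j')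
  have hmaps : ∀ j ∈ Finset.univ, g j ∈ Finset.univ.erase a := fun j _ =>
    Finset.mem_erase.mpr ⟨ne_of_apply_ne (bostonState pref n) (by simp [hg j, ha]),
      Finset.mem_univ _⟩
  have := Finset.card_le_card_of_injOn g hmaps (by simpa using hinj)
  simp only [Finset.card_univ, Fintype.card_fin, Finset.mem_univ, Finset.card_erase_of_mem] at this
  have := a.pos
  omega

end Boston

section PFQ

variable {n : ℕ} (pref : Fin n → ℕ → Fin n)

def unmatched (st : Fin n → Option (Fin n)) : List (Fin n) :=
  (List.finRange n).filter fun a => st a = none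

lemma mem_unmatched {st : Fin n → Option (Fin n)} {a : Fin n} :
    a ∈ unmatched st ↔ st a = none := by
  simp [unmatched]

lemma unmatched_pairwise_lt (st : Fin n → Option (Fin n)) : (unmatched st).Pairwise (· < ·) :=
  (List.pairwise_lt_finRange n).filter _

lemma unmatched_bostonState_filter (k : ℕ) :
    (unmatched (bostonState pref k)).filter (fun b => bostonState pref (k + 1) b = none) =
      unmatched (bostonState pref (k + 1)) := by
  rw [unmatched, unmatched, List.filter_filter]
  refine List.filter_congr fun b _ => ?_
  by_cases hb : bostonState pref (k + 1) b = none
  · simp [hb, bostonState_eq_none_of_le pref k.le_succ hb]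
  · simp [hb]

lemma unmatched_bostonState_eq_nil
    (hpref : ∀ a : Fin n, ∀ k l : ℕ, k < n → l < n → pref a k = pref a l → k = l) :
    unmatched (bostonState pref n) = [] :=
  List.filter_eq_nil_iff.mpr fun a _ => by simpa using bostonState_ne_none pref hpref a

def pfqInit (n : ℕ) : PFQState n :=
  { queue := List.finRange n, rejected := fun _ => ∅, assign := fun _ => none }

lemma pfqStep_of_queue_eq_nil {s : PFQState n} (h : s.queue = []) : pfqStep pref s = s := by
  simp [pfqStep, h]

lemma pfqStep_of_queue_eq_cons
    (hpref : ∀ a : Fin n, ∀ k l : ℕ, k < n → l < n → pref a k = pref a l → k = l)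
    {k : ℕ} (hk : k < n) {s : PFQState n} {a : Fin n} {rest : List (Fin n)}
    (hq : s.queue = a :: rest) (hr : s.rejected a = (Finset.range k).image (pref a)) :
    pfqStep pref s =
      if ∀ b, s.assign b ≠ some (pref a k) then
        { s with queue := rest, assign := Function.update s.assign a (some (pref a k)) }
      else
        { s with queue := rest ++ [a],
                 rejected := Function.update s.rejected a
                    ((Finset.range (k + 1)).image (pref a)) } := by
  have hfind : (List.range n).find? (fun j => decide (pref a j ∉ s.rejected a)) = some k := by
    rw [List.find?_range_eq_some]
    refine ⟨?_, List.mem_range.mpr hk, fun j hj => ?_⟩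
    · simp only [hr, decide_eq_true_eq, Finset.mem_image, Finset.mem_range, not_exists, not_and]
      exact fun j hj h => hj.ne (hpref a j k (hj.trans hk) hk h)
    · simpa [hr] using ⟨j, hj, rfl⟩
  simp only [pfqStep, hq, hfind]
  simp only [hr, Finset.range_add_one, Finset.image_insert]

/-- PFQ is in the middle of Boston round `k`: of the agents unmatched after `k` rounds, those in
`P` have already proposed to their `k`-th choice, those in `Q` have not. -/
structure PFQInRound (k : ℕ) (P Q : List (Fin n)) (s : PFQState n) : Prop where
  unmatched_eq : unmatched (bostonState pref k) = P ++ Q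
  queue_eq : s.queue = Q ++ P.filter fun b => bostonState pref (k + 1) b = none
  assign_eq : ∀ b, s.assign b = if b ∈ Q then none else bostonState pref (k + 1) b
  rejected_of_mem_right : ∀ b ∈ Q, s.rejected b = (Finset.range k).image (pref b)
  rejected_of_mem_left : ∀ b ∈ P, bostonState pref (k + 1) b = none →
    s.rejected b = (Finset.range (k + 1)).image (pref b)

namespace PFQInRound

variable {pref} {k : ℕ} {P Q : List (Fin n)} {a : Fin n} {s : PFQState n}

lemma assign_eq_bostonStateBefore (h : PFQInRound pref k P (a :: Q) s) :
    s.assign = bostonStateBefore pref k a := by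
  have hsorted := h.unmatched_eq ▸ unmatched_pairwise_lt (bostonState pref k)
  obtain ⟨-, -, hPa⟩ := List.pairwise_append.mp hsorted
  funext b
  rw [h.assign_eq, bostonStateBefore]
  by_cases hbQ : b ∈ a :: Q
  · have hab : a ≤ b := by
      rcases List.mem_cons.mp hbQ with rfl | hb
      · exact le_rfl
      · exact ((List.pairwise_cons.mp (List.pairwise_append.mp hsorted).2.1).1 b hb).le
    rw [if_pos hbQ, if_neg hab.not_gt]
    exact (mem_unmatched.mp (h.unmatched_eq ▸ List.mem_append_right P hbQ)).symm
  · rw [if_neg hbQ]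
    split_ifs with hba
    · rfl
    · refine bostonState_succ_eq_of_ne_none pref fun hb => ?_
      rcases List.mem_append.mp (h.unmatched_eq ▸ mem_unmatched.mpr hb) with hbP | hbQ'
      · exact hba (hPa b hbP a List.mem_cons_self)
      · exact hbQ hbQ'

lemma step
    (hpref : ∀ a : Fin n, ∀ k l : ℕ, k < n → l < n → pref a k = pref a l → k = l)
    (hk : k < n) (h : PFQInRound pref k P (a :: Q) s) :
    PFQInRound pref k (P ++ [a]) Q (pfqStep pref s) := by
  have hnodup : a ∉ P ++ Q := List.nodup_cons.mp (List.nodup_middle.mp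
    ((h.unmatched_eq ▸ unmatched_pairwise_lt (bostonState pref k)).nodup)) |>.1
  have haP : a ∉ P := fun ha => hnodup (List.mem_append_left Q ha)
  have haQ : a ∉ Q := fun ha => hnodup (List.mem_append_right P ha)
  have ha : bostonState pref k a = none := mem_unmatched.mp (by simp [h.unmatched_eq])
  have hunm : unmatched (bostonState pref k) = P ++ [a] ++ Q := by simp [h.unmatched_eq]
  rw [pfqStep_of_queue_eq_cons pref hpref hk (by rw [h.queue_eq, List.cons_append])
    (h.rejected_of_mem_right a List.mem_cons_self)]
  split_ifs with hfree
  · have hacc : bostonState pref (k + 1) a = some (pref a k) :=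
      (bostonState_succ_eq_some_iff pref ha).mpr (h.assign_eq_bostonStateBefore ▸ hfree)
    refine ⟨hunm, by simp [hacc], fun b => ?_,
      fun b hb => h.rejected_of_mem_right b (List.mem_cons_of_mem a hb), fun b hb hbn => ?_⟩
    · rcases eq_or_ne b a with rfl | hba
      · simp [haQ, hacc]
      · simp [h.assign_eq, hba]
    · rcases List.mem_append.mp hb with hbP | hba
      · exact h.rejected_of_mem_left b hbP hbn
      · simp [List.mem_singleton.mp hba, hacc] at hbn
  · have hrej : bostonState pref (k + 1) a = none :=
      bostonState_succ_eq_none_of_ne pref ha fun hacc =>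
        hfree (h.assign_eq_bostonStateBefore ▸ (bostonState_succ_eq_some_iff pref ha).mp hacc)
    refine ⟨hunm, by simp [hrej], fun b => ?_, fun b hb => ?_, fun b hb hbn => ?_⟩
    · rcases eq_or_ne b a with rfl | hba
      · simp [h.assign_eq, haQ, hrej]
      · simp [h.assign_eq, hba]
    · simp [Function.update_of_ne (ne_of_mem_of_not_mem hb haQ),
        h.rejected_of_mem_right b (List.mem_cons_of_mem a hb)]
    · rcases List.mem_append.mp hb with hbP | hba
      · simp [Function.update_of_ne (ne_of_mem_of_not_mem hbP haP),
          h.rejected_of_mem_left b hbP hbn]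
      · simp [List.mem_singleton.mp hba]

lemma finishRound
    (hpref : ∀ a : Fin n, ∀ k l : ℕ, k < n → l < n → pref a k = pref a l → k = l)
    (hk : k < n) (h : PFQInRound pref k P Q s) :
    PFQInRound pref k (P ++ Q) [] ((pfqStep pref)^[Q.length] s) := by
  induction Q generalizing P s with
  | nil => simpa using h
  | cons a Q ih =>
    simpa [Function.iterate_succ_apply] using ih (h.step hpref hk)

lemma nextRound (h : PFQInRound pref k P [] s) :
    PFQInRound pref (k + 1) [] (unmatched (bostonState pref (k + 1))) s := by
  have hP : P = unmatched (bostonState pref k) := by simp [h.unmatched_eq]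
  refine ⟨rfl, ?_, fun b => ?_, fun b hb => ?_, by simp⟩
  · simp [h.queue_eq, hP, unmatched_bostonState_filter]
  · rw [h.assign_eq b, if_neg List.not_mem_nil]
    split_ifs with hb
    · exact mem_unmatched.mp hb
    · exact (bostonState_succ_eq_of_ne_none pref (mem_unmatched.not.mp hb)).symm
  · have hbn := mem_unmatched.mp hb
    exact h.rejected_of_mem_left b
      (hP ▸ mem_unmatched.mpr (bostonState_eq_none_of_le pref k.le_succ hbn)) hbn

lemma assign_eq_bostonState
    (h : PFQInRound pref k [] (unmatched (bostonState pref k)) s) :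
    s.assign = bostonState pref k := by
  funext b
  rw [h.assign_eq b]
  split_ifs with hb
  · exact (mem_unmatched.mp hb).symm
  · exact bostonState_succ_eq_of_ne_none pref (mem_unmatched.not.mp hb)

end PFQInRound

lemma pfqInRound_zero : PFQInRound pref 0 [] (unmatched (bostonState pref 0)) (pfqInit n) := by
  have hunm : unmatched (bostonState pref 0) = List.finRange n :=
    List.filter_eq_self.mpr fun _ _ => by simp [bostonState]
  refine ⟨rfl, by simp [hunm, pfqInit], fun b => ?_, fun b _ => by simp [pfqInit], by simp⟩
  simp [hunm, pfqInit]

lemma exists_iterate_pfqStep_pfqInRound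
    (hpref : ∀ a : Fin n, ∀ k l : ℕ, k < n → l < n → pref a k = pref a l → k = l)
    {k : ℕ} (hk : k ≤ n) : ∃ m ≤ k * n,
      PFQInRound pref k [] (unmatched (bostonState pref k)) ((pfqStep pref)^[m] (pfqInit n)) := by
  induction k with
  | zero => exact ⟨0, Nat.zero_le _, pfqInRound_zero pref⟩
  | succ k ih =>
    obtain ⟨m, hm, h⟩ := ih (by omega)
    have hlen : (unmatched (bostonState pref k)).length ≤ n :=
      (List.length_filter_le _ _).trans_eq (List.length_finRange)
    refine ⟨(unmatched (bostonState pref k)).length + m, by rw [Nat.succ_mul]; omega, ?_⟩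
    rw [Function.iterate_add_apply]
    exact (h.finishRound hpref (by omega)).nextRound

end PFQ

theorem pfq_eq_naive_boston_general {n : ℕ} (pref : Fin n → ℕ → Fin n)
    (hpref : ∀ a : Fin n, ∀ k l : ℕ, k < n → l < n → pref a k = pref a l → k = l) :
    ∀ a : Fin n, (pfqRun pref).assign a = bostonState pref n a := by
  obtain ⟨m, hm, h⟩ := exists_iterate_pfqStep_pfqInRound pref hpref le_rfl
  have hdone : ((pfqStep pref)^[m] (pfqInit n)).queue = [] := by
    simp [h.queue_eq, unmatched_bostonState_eq_nil pref hpref]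
  have hrun : pfqRun pref = (pfqStep pref)^[m] (pfqInit n) := by
    rw [pfqRun, ← Nat.sub_add_cancel (hm.trans (Nat.le_add_right (n * n) n)),
      Function.iterate_add_apply]
    exact Function.iterate_fixed (pfqStep_of_queue_eq_nil pref hdone) _
  rw [hrun, h.assign_eq_bostonState]
  exact fun _ => rfl

/-- PFQ (permanent memory, Accept-First, queue) with initial agent order
`0, 1, …, n-1` produces the same matching as the simultaneous Naive Boston
mechanism in which every item has the common priority order `0 > 1 > ⋯ > n-1`. -/
theorem pfq_eq_naive_boston {n : ℕ} (pref : Fin n → ℕ → Fin n)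
    (hpref : ∀ a : Fin n, ∀ k l : ℕ, k < n → l < n → pref a k = pref a l → k = l)
    (hsurj : ∀ a : Fin n, ∀ o : Fin n, ∃ k < n, pref a k = o) :
    ∀ a : Fin n, (pfqRun pref).assign a = bostonState pref n a :=
  pfq_eq_naive_boston_general pref hpref
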